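/- For coprime integers p, q and p', q' with q, q' > 0 and p/q ≠ p'/q', consider the Ford circles C_{p/q} and C_{p'/q'}, i.e., the circles in ℝ² centered at (p/q, 1/(2q²)) and (p'/q', 1/(2q'²)) with radii 1/(2q²) and 1/(2q'²) respectively. Then the squared distance between their centers minus the square of the sum of their radii equals ((p q' − p' q)² − 1)/(q² q'²). Consequently, the two circles are externally tangent (the distance between centers equals the sum of the radii) if and only if |p q' − p' q| = 1. -/
import Mathlib


/-- Ford circles `C_{p/q}` (center `(p/q, 1/(2q²))`, radius
`1/(2q²)`) and `C_{p'/q'}`: the squared Euclidean distance between the centers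
minus the square of the sum of the radii equals `((pq' - p'q)² - 1)/(q² q'²)`;
consequently the circles are externally tangent iff `|pq' - p'q| = 1`. -/
theorem stmt_15 (p q p' q' : ℤ) (hq : 0 < q) (hq' : 0 < q')
    (hcop : Int.gcd p q = 1) (hcop' : Int.gcd p' q' = 1)
    (hne : (p : ℝ) / q ≠ (p' : ℝ) / q') :
    (((p : ℝ) / q - (p' : ℝ) / q') ^ 2
        + (1 / (2 * (q : ℝ) ^ 2) - 1 / (2 * (q' : ℝ) ^ 2)) ^ 2)
      - (1 / (2 * (q : ℝ) ^ 2) + 1 / (2 * (q' : ℝ) ^ 2)) ^ 2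
      = (((p * q' - p' * q : ℤ) : ℝ) ^ 2 - 1) / ((q : ℝ) ^ 2 * (q' : ℝ) ^ 2) ∧
    (Real.sqrt (((p : ℝ) / q - (p' : ℝ) / q') ^ 2
          + (1 / (2 * (q : ℝ) ^ 2) - 1 / (2 * (q' : ℝ) ^ 2)) ^ 2)
        = 1 / (2 * (q : ℝ) ^ 2) + 1 / (2 * (q' : ℝ) ^ 2)
      ↔ |p * q' - p' * q| = 1) := by
  have hq0 : (q : ℝ) ≠ 0 := by positivity
  have hq'0 : (q' : ℝ) ≠ 0 := by positivity
  have key : (((p : ℝ) / q - (p' : ℝ) / q') ^ 2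
        + (1 / (2 * (q : ℝ) ^ 2) - 1 / (2 * (q' : ℝ) ^ 2)) ^ 2)
      - (1 / (2 * (q : ℝ) ^ 2) + 1 / (2 * (q' : ℝ) ^ 2)) ^ 2
      = (((p * q' - p' * q : ℤ) : ℝ) ^ 2 - 1) / ((q : ℝ) ^ 2 * (q' : ℝ) ^ 2) := by
    push_cast
    field_simp
    ring
  refine ⟨key, ?_⟩
  have hA : (0:ℝ) ≤ ((p : ℝ) / q - (p' : ℝ) / q') ^ 2
        + (1 / (2 * (q : ℝ) ^ 2) - 1 / (2 * (q' : ℝ) ^ 2)) ^ 2 := by positivity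
  have hr : (0:ℝ) ≤ 1 / (2 * (q : ℝ) ^ 2) + 1 / (2 * (q' : ℝ) ^ 2) := by positivity
  have hsq : Real.sqrt (((p : ℝ) / q - (p' : ℝ) / q') ^ 2
          + (1 / (2 * (q : ℝ) ^ 2) - 1 / (2 * (q' : ℝ) ^ 2)) ^ 2)
        = 1 / (2 * (q : ℝ) ^ 2) + 1 / (2 * (q' : ℝ) ^ 2)
      ↔ ((p : ℝ) / q - (p' : ℝ) / q') ^ 2
          + (1 / (2 * (q : ℝ) ^ 2) - 1 / (2 * (q' : ℝ) ^ 2)) ^ 2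
        = (1 / (2 * (q : ℝ) ^ 2) + 1 / (2 * (q' : ℝ) ^ 2)) ^ 2 := by
    constructor
    · intro h
      rw [← Real.sq_sqrt hA, h]
    · intro h
      rw [h, Real.sqrt_sq hr]
  rw [hsq]
  have h2 : ((p : ℝ) / q - (p' : ℝ) / q') ^ 2
          + (1 / (2 * (q : ℝ) ^ 2) - 1 / (2 * (q' : ℝ) ^ 2)) ^ 2
        = (1 / (2 * (q : ℝ) ^ 2) + 1 / (2 * (q' : ℝ) ^ 2)) ^ 2
      ↔ (((p * q' - p' * q : ℤ) : ℝ) ^ 2 - 1) = 0 := by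
    rw [← sub_eq_zero]
    rw [key]
    rw [div_eq_zero_iff]
    simp [hq0, hq'0]
  rw [h2]
  rw [sub_eq_zero]
  constructor
  · intro h
    have : ((p * q' - p' * q : ℤ) : ℝ) ^ 2 = ((1:ℤ):ℝ) := by exact_mod_cast h
    have h3 : (p * q' - p' * q) ^ 2 = 1 := by exact_mod_cast this
    have := sq_abs (p * q' - p' * q)
    nlinarith [abs_nonneg (p * q' - p' * q)]
  · intro h
    have h3 : (p * q' - p' * q) ^ 2 = 1 := by
      rw [← sq_abs, h]; ring
    exact_mod_cast h3
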